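/- The characteristic polynomial of M = [[0,1,0],[-1,0,1],[0,-1,1]] is λ³ − λ² + 2λ − 1, and every complex root λ of λ³ − λ² + 2λ − 1 satisfies Re(λ) > 0. -/

import Mathlib

/-!
The characteristic polynomial is read off the general formula for a `3 × 3` matrix
(`X³ - tr M X² + (sum of principal 2 × 2 minors) X - det M`). For the roots, `μ = -λ` is a root
of `μ³ + μ² + 2μ + 1`, which is Hurwitz stable by the Routh–Hurwitz criterion for cubics
`z³ + a z² + b z + c` (`a, c > 0`, `a b > c`).
-/

open Matrix Polynomial

theorem Matrix.charpoly_fin_three {R : Type*} [CommRing R] (M : Matrix (Fin 3) (Fin 3) R) :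
    M.charpoly = X ^ 3 - C M.trace * X ^ 2
      + C (M 0 0 * M 1 1 - M 0 1 * M 1 0 + M 0 0 * M 2 2 - M 0 2 * M 2 0
        + M 1 1 * M 2 2 - M 1 2 * M 2 1) * X - C M.det := by
  simp only [charpoly, det_fin_three, trace_fin_three, charmatrix_apply, diagonal_apply]
  simp only [Fin.isValue, Fin.reduceEq, ↓reduceIte, map_sub, map_add, map_mul]
  ring

theorem Complex.re_neg_of_cubic_eq_zero {a b c : ℝ} (ha : 0 < a) (hc : 0 < c) (habc : c < a * b)
    {z : ℂ} (hz : z ^ 3 + a * z ^ 2 + b * z + c = 0) : z.re < 0 := by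
  obtain ⟨x, y⟩ := z
  have hb : 0 < b := pos_of_mul_pos_right (hc.trans habc) ha.le
  have hre : x ^ 3 - 3 * x * y ^ 2 + a * (x ^ 2 - y ^ 2) + b * x + c = 0 := by
    have := congrArg Complex.re hz
    simp only [pow_succ, pow_zero, one_mul, add_re, mul_re, mul_im, ofReal_re, ofReal_im,
      zero_re] at this
    linear_combination this
  have him : y * (3 * x ^ 2 - y ^ 2 + 2 * a * x + b) = 0 := by
    have := congrArg Complex.im hz
    simp only [pow_succ, pow_zero, one_mul, add_im, mul_re, mul_im, ofReal_re, ofReal_im,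
      zero_im] at this
    linear_combination this
  by_contra! hx
  rcases mul_eq_zero.mp him with hy | hy
  · subst hy
    nlinarith [pow_nonneg hx 3, mul_nonneg ha.le (sq_nonneg x), mul_nonneg hb.le hx]
  · -- eliminating `y²` leaves a polynomial in `x` whose coefficients are all negative
    have : -8 * x ^ 3 - 8 * a * x ^ 2 - 2 * (b + a ^ 2) * x + (c - a * b) = 0 := by
      linear_combination hre - (3 * x + a) * hy
    nlinarith [pow_nonneg hx 3, mul_nonneg ha.le (sq_nonneg x),
      mul_nonneg (by positivity : 0 ≤ b + a ^ 2) hx]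

theorem stmt1 :
    let M : Matrix (Fin 3) (Fin 3) ℝ := !![0, 1, 0; -1, 0, 1; 0, -1, 1]
    M.charpoly = X ^ 3 - X ^ 2 + 2 * X - 1 ∧
      ∀ lam : ℂ, lam ^ 3 - lam ^ 2 + 2 * lam - 1 = 0 → 0 < lam.re := by
  intro M
  refine ⟨?_, fun lam hlam => ?_⟩
  · rw [charpoly_fin_three]
    simp only [M, trace_fin_three, det_fin_three, of_apply, cons_val', cons_val_zero, cons_val_one,
      cons_val, cons_val_fin_one]
    norm_num [C_ofNat]
  · have hneg : (-lam).re < 0 :=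
      Complex.re_neg_of_cubic_eq_zero (a := 1) (b := 2) (c := 1) one_pos one_pos (by norm_num)
        (by push_cast; linear_combination -hlam)
    simpa using hneg
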